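/- For X ⊆ 2^ω, the game G^γ_{F,C}(X) is equivalent to the neighborhood game G^f_{O,P}(X_F, ∞) on the space X_F: player O has a winning strategy in one iff F has one in the other, and P has a winning strategy iff C does; concretely, neighborhoods of ∞ in X_F correspond to finite subsets F ⊆ X via the set 2^{<ω} \ {x↾n : x ∈ F, n < ω}, and finite sets P_n ⊆ 2^{<ω} correspond to clopen sets C_n = 2^ω \ ⋃{[s] : s ∈ P_n}, with the convergence condition for ⟨P_n⟩ equivalent to ⟨C_n⟩ being a γ-cover of X. -/

import Mathlib

open Filter Set

/-- The initial segment `x ↾ n` of `x : 2^ω`, as an element of `2^{<ω}`. -/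
def initSeg (x : ℕ → Bool) (n : ℕ) : List Bool := (List.range n).map x

/-- The topology on `X_F = 2^{<ω} ∪ {∞}` (here `∞ = none`): every `σ ∈ 2^{<ω}` is
isolated, and basic neighborhoods of `∞` are complements of the sets of initial
segments of finitely many elements of `X`. -/
def XFtop (X : Set (ℕ → Bool)) : TopologicalSpace (Option (List Bool)) :=
  TopologicalSpace.generateFrom
    ({s | ∃ σ : List Bool, s = {some σ}} ∪
     {s | ∃ F : Set (ℕ → Bool), F ⊆ X ∧ F.Finite ∧
        s = insert none
          {p | ∃ σ : List Bool, p = some σ ∧ ¬ ∃ x ∈ F, ∃ n : ℕ, σ = initSeg x n}})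

def IsGammaCover (X : Set (ℕ → Bool)) (V : ℕ → Set (ℕ → Bool)) : Prop :=
  (∀ n, IsOpen (V n)) ∧ ∀ x ∈ X, ∀ᶠ n in atTop, x ∈ V n

/-! Strategies in the game `G^γ_{F,C}(X)`. -/

/-- F's `n`-th move using strategy `σ` against C's previous moves `c 0, …, c (n-1)`. -/
def FmoveOf (σ : List (Set (ℕ → Bool)) → Set (ℕ → Bool)) (c : ℕ → Set (ℕ → Bool))
    (n : ℕ) : Set (ℕ → Bool) :=
  σ ((List.range n).map c)

/-- C's `n`-th move using strategy `σ` against F's moves `F 0, …, F n`. -/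
def CmoveOf (σ : List (Set (ℕ → Bool)) → Set (ℕ → Bool)) (F : ℕ → Set (ℕ → Bool))
    (n : ℕ) : Set (ℕ → Bool) :=
  σ ((List.range (n + 1)).map F)

def WinningForF (X : Set (ℕ → Bool)) (σ : List (Set (ℕ → Bool)) → Set (ℕ → Bool)) : Prop :=
  ∀ c : ℕ → Set (ℕ → Bool),
    (∀ n, (FmoveOf σ c n).Finite ∧ FmoveOf σ c n ⊆ X) ∧
    ((∀ n, IsClopen (c n) ∧ FmoveOf σ c n ⊆ c n) → IsGammaCover X c)

def WinningForC (X : Set (ℕ → Bool)) (σ : List (Set (ℕ → Bool)) → Set (ℕ → Bool)) : Prop :=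
  ∀ F : ℕ → Set (ℕ → Bool), (∀ n, (F n).Finite ∧ F n ⊆ X) →
    (∀ n, IsClopen (CmoveOf σ F n) ∧ F n ⊆ CmoveOf σ F n) ∧
    ¬ IsGammaCover X (CmoveOf σ F)

/-! Strategies in the neighborhood game `G^f_{O,P}(β, y)` for a topology `t` on `β`. -/

/-- O's `n`-th move against P's previous moves. -/
def OmoveOf {β : Type*} (σ : List (Set β) → Set β) (p : ℕ → Set β) (n : ℕ) : Set β :=
  σ ((List.range n).map p)

/-- P's `n`-th move against O's moves `u 0, …, u n`. -/
def PmoveOf {β : Type*} (σ : List (Set β) → Set β) (u : ℕ → Set β) (n : ℕ) : Set β :=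
  σ ((List.range (n + 1)).map u)

/-- The sequence of finite sets `p n` converges to `y`: every open neighborhood of `y`
contains `p n` for all but finitely many `n`. -/
def ConvergesTo {β : Type*} (t : TopologicalSpace β) (y : β) (p : ℕ → Set β) : Prop :=
  ∀ V : Set β, t.IsOpen V → y ∈ V → ∀ᶠ n in atTop, p n ⊆ V

def WinningForO {β : Type*} (t : TopologicalSpace β) (y : β)
    (σ : List (Set β) → Set β) : Prop :=
  ∀ p : ℕ → Set β,
    (∀ n, t.IsOpen (OmoveOf σ p n) ∧ y ∈ OmoveOf σ p n) ∧
    ((∀ n, (p n).Finite ∧ p n ⊆ OmoveOf σ p n \ {y}) → ConvergesTo t y p)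

def WinningForP {β : Type*} (t : TopologicalSpace β) (y : β)
    (σ : List (Set β) → Set β) : Prop :=
  ∀ u : ℕ → Set β, (∀ n, t.IsOpen (u n) ∧ y ∈ u n) →
    (∀ n, (PmoveOf σ u n).Finite ∧ PmoveOf σ u n ⊆ u n \ {y}) ∧
    ¬ ConvergesTo t y (PmoveOf σ u)


/-!
A finite `F ⊆ X` and the basic neighbourhood `2^{<ω} \ {x ↾ n : x ∈ F}` of `∞` determine each
other up to shrinking, and a finite `P ⊆ 2^{<ω}` gives the clopen set `2^ω \ ⋃ {[s] : s ∈ P}`.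
Conversely, by compactness a clopen `C ⊆ 2^ω` depends only on the first `N` coordinates for some
`N`, so its complement is the union of the cylinders of the length-`N` prefixes of its points.
Under these translations legal moves go to legal moves, and `⟨P_n⟩` converges to `∞` exactly when
`⟨C_n⟩` is a γ-cover of `X`. Hence each game reduces to the other, and a reduction transports
winning strategies of the first player forwards and of the second player backwards.
-/

open PiNat

/-- A game of length `ω` in which player I plays `U n`, player II answers `P n`, with
`legalII (U n) (P n)`, and the winner depends only on II's moves. -/
structure SetGame (α : Type*) where
  legalI : Set α → Prop
  legalII : Set α → Set α → Prop
  winI : (ℕ → Set α) → Prop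

namespace SetGame

variable {α β : Type*}

def IsWinningI (G : SetGame α) (σ : List (Set α) → Set α) : Prop :=
  ∀ p, (∀ n, G.legalI (OmoveOf σ p n)) ∧
    ((∀ n, G.legalII (OmoveOf σ p n) (p n)) → G.winI p)

def IsWinningII (G : SetGame α) (τ : List (Set α) → Set α) : Prop :=
  ∀ u, (∀ n, G.legalI (u n)) →
    (∀ n, G.legalII (u n) (PmoveOf τ u n)) ∧ ¬ G.winI (PmoveOf τ u)

structure Reduction (G : SetGame α) (H : SetGame β) where
  mapI : Set α → Set β
  mapII : Set β → Set α
  legalI_mapI : ∀ U, G.legalI U → H.legalI (mapI U)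
  legalII_mapII : ∀ U P, G.legalI U → H.legalII (mapI U) P → G.legalII U (mapII P)
  winI_of_winI_mapII :
    ∀ p : ℕ → Set β, (∀ n, ∃ U, H.legalII U (p n)) → G.winI (mapII ∘ p) → H.winI p

lemma omoveOf_comp_map (f : Set α → Set β) (g : Set β → Set α) (σ : List (Set α) → Set α)
    (p : ℕ → Set β) :
    OmoveOf (fun l => f (σ (l.map g))) p = f ∘ OmoveOf σ (g ∘ p) := by
  ext1 n
  simp [OmoveOf, List.map_map]

lemma pmoveOf_comp_map (f : Set α → Set β) (g : Set β → Set α) (τ : List (Set α) → Set α)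
    (u : ℕ → Set β) :
    PmoveOf (fun l => f (τ (l.map g))) u = f ∘ PmoveOf τ (g ∘ u) := by
  ext1 n
  simp [PmoveOf, List.map_map]

namespace Reduction

variable {G : SetGame α} {H : SetGame β} (R : G.Reduction H)

theorem isWinningI {σ : List (Set α) → Set α} (hσ : G.IsWinningI σ) :
    H.IsWinningI fun l => R.mapI (σ (l.map R.mapII)) := by
  intro p
  obtain ⟨hlegal, hwin⟩ := hσ (R.mapII ∘ p)
  simp only [omoveOf_comp_map, Function.comp_apply]
  exact ⟨fun n => R.legalI_mapI _ (hlegal n), fun hp => R.winI_of_winI_mapII p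
    (fun n => ⟨_, hp n⟩) (hwin fun n => R.legalII_mapII _ _ (hlegal n) (hp n))⟩

theorem isWinningII {τ : List (Set β) → Set β} (hτ : H.IsWinningII τ) :
    G.IsWinningII fun l => R.mapII (τ (l.map R.mapI)) := by
  intro u hu
  obtain ⟨hlegal, hlose⟩ := hτ (R.mapI ∘ u) fun n => R.legalI_mapI _ (hu n)
  simp only [pmoveOf_comp_map, Function.comp_apply]
  exact ⟨fun n => R.legalII_mapII _ _ (hu n) (hlegal n),
    fun hwin => hlose (R.winI_of_winI_mapII _ (fun n => ⟨_, hlegal n⟩) hwin)⟩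

end Reduction

end SetGame

section CantorSpace

variable {E : ℕ → Type*} [∀ n, TopologicalSpace (E n)] [∀ n, DiscreteTopology (E n)]

lemma exists_cylinder_subset {s : Set (∀ n, E n)} (hs : IsOpen s) {x : ∀ n, E n} (hx : x ∈ s) :
    ∃ n, cylinder x n ⊆ s := by
  obtain ⟨_, ⟨y, n, rfl⟩, hxy, hsub⟩ :=
    (isTopologicalBasis_cylinders E).exists_subset_of_mem_open hx hs
  exact ⟨n, mem_cylinder_iff_eq.1 hxy ▸ hsub⟩

theorem IsClopen.exists_mem_iff_of_mem_cylinder [CompactSpace (∀ n, E n)] {c : Set (∀ n, E n)}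
    (hc : IsClopen c) : ∃ N, ∀ x, ∀ y ∈ cylinder x N, (y ∈ c ↔ x ∈ c) := by
  have hlocal : ∀ x, ∃ n, cylinder x n ⊆ {y | y ∈ c ↔ x ∈ c} := by
    intro x
    refine exists_cylinder_subset ?_ Iff.rfl
    by_cases hx : x ∈ c
    · simp only [hx, iff_true]
      exact hc.isOpen
    · simp only [hx, iff_false]
      exact hc.compl.isOpen
  choose m hm using hlocal
  obtain ⟨t, ht⟩ := CompactSpace.elim_nhds_subcover (fun x => cylinder x (m x))
    fun x => (isOpen_cylinder E x _).mem_nhds (self_mem_cylinder x _)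
  refine ⟨t.sup m, fun x y hy => ?_⟩
  obtain ⟨z, hz, hxz⟩ : ∃ z ∈ t, x ∈ cylinder z (m z) := by
    simpa using ht.ge (mem_univ x)
  have hyz : y ∈ cylinder z (m z) :=
    mem_cylinder_iff_eq.1 hxz ▸ cylinder_anti x (Finset.le_sup hz) hy
  exact (hm z hyz).trans (hm z hxz).symm

end CantorSpace

lemma initSeg_length (x : ℕ → Bool) (n : ℕ) : (initSeg x n).length = n := by
  simp [initSeg]

lemma initSeg_eq_initSeg_iff {x y : ℕ → Bool} {n : ℕ} :
    initSeg y n = initSeg x n ↔ y ∈ cylinder x n := by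
  simp [initSeg]

lemma isClopen_setOf_initSeg_mem (n : ℕ) (S : Set (List Bool)) :
    IsClopen {x | initSeg x n ∈ S} := by
  have hopen : ∀ S : Set (List Bool), IsOpen {x | initSeg x n ∈ S} := fun S =>
    isOpen_iff_forall_mem_open.2 fun x hx => ⟨cylinder x n,
      fun y hy => by rwa [mem_ofPred_eq, initSeg_eq_initSeg_iff.2 hy],
      isOpen_cylinder _ x n, self_mem_cylinder x n⟩
  exact ⟨⟨hopen Sᶜ⟩, hopen S⟩

noncomputable def clopenDepth (c : Set (ℕ → Bool)) : ℕ :=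
  sInf {N | ∀ x, ∀ y ∈ cylinder x N, (y ∈ c ↔ x ∈ c)}

lemma mem_iff_of_initSeg_clopenDepth_eq {c : Set (ℕ → Bool)} (hc : IsClopen c) {x y : ℕ → Bool}
    (h : initSeg y (clopenDepth c) = initSeg x (clopenDepth c)) : y ∈ c ↔ x ∈ c :=
  Nat.sInf_mem hc.exists_mem_iff_of_mem_cylinder x y (initSeg_eq_initSeg_iff.1 h)

/-- The clopen set `2^ω \ ⋃ {[s] : s ∈ P}` attached to a move `P` in the neighbourhood game. -/
def cylindersCompl (P : Set (Option (List Bool))) : Set (ℕ → Bool) :=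
  {x | ∀ n, some (initSeg x n) ∉ P}

/-- The finite set of strings whose cylinders make up the complement of a clopen `c`. -/
def complPrefixes (c : Set (ℕ → Bool)) : Set (Option (List Bool)) :=
  (fun x => some (initSeg x (clopenDepth c))) '' cᶜ

lemma isClopen_cylindersCompl {P : Set (Option (List Bool))} (hP : P.Finite) :
    IsClopen (cylindersCompl P) := by
  have heq : cylindersCompl P = ⋂ σ ∈ some ⁻¹' P, {x | initSeg x σ.length ∈ ({σ}ᶜ : Set _)} := by
    ext x
    simp only [cylindersCompl, mem_ofPred_eq, mem_iInter, mem_preimage, mem_compl_singleton_iff]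
    refine ⟨fun h σ hσ hx => h _ (hx ▸ hσ), fun h n hn => h _ hn ?_⟩
    rw [initSeg_length]
  rw [heq]
  exact (hP.preimage (Option.some_injective _).injOn).isClopen_biInter fun σ _ =>
    isClopen_setOf_initSeg_mem _ _

lemma complPrefixes_finite (c : Set (ℕ → Bool)) : (complPrefixes c).Finite := by
  refine ((List.finite_length_eq Bool (clopenDepth c)).image some).subset ?_
  rintro _ ⟨x, -, rfl⟩
  exact ⟨_, initSeg_length x _, rfl⟩

lemma none_notMem_complPrefixes (c : Set (ℕ → Bool)) : none ∉ complPrefixes c := by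
  rintro ⟨x, -, h⟩
  exact Option.some_ne_none _ h

lemma some_initSeg_mem_complPrefixes_iff {c : Set (ℕ → Bool)} (hc : IsClopen c)
    {x : ℕ → Bool} {n : ℕ} :
    some (initSeg x n) ∈ complPrefixes c ↔ n = clopenDepth c ∧ x ∉ c := by
  constructor
  · rintro ⟨y, hy, h⟩
    have h' : initSeg y (clopenDepth c) = initSeg x n := Option.some_injective _ h
    obtain rfl : clopenDepth c = n := by simpa [initSeg_length] using congrArg List.length h'
    exact ⟨rfl, fun hx => hy ((mem_iff_of_initSeg_clopenDepth_eq hc h').2 hx)⟩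
  · rintro ⟨rfl, hx⟩
    exact ⟨x, hx, rfl⟩

lemma cylindersCompl_complPrefixes {c : Set (ℕ → Bool)} (hc : IsClopen c) :
    cylindersCompl (complPrefixes c) = c := by
  ext x
  simp only [cylindersCompl, mem_ofPred_eq, some_initSeg_mem_complPrefixes_iff hc, not_and,
    not_not]
  exact ⟨fun h => h _ rfl, fun hx _ _ => hx⟩

def basicNbhd (F : Set (ℕ → Bool)) : Set (Option (List Bool)) :=
  insert none {p | ∃ σ : List Bool, p = some σ ∧ ¬ ∃ x ∈ F, ∃ n : ℕ, σ = initSeg x n}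

lemma none_mem_basicNbhd (F : Set (ℕ → Bool)) : none ∈ basicNbhd F :=
  mem_insert _ _

lemma some_mem_basicNbhd_iff {F : Set (ℕ → Bool)} {σ : List Bool} :
    some σ ∈ basicNbhd F ↔ ∀ x ∈ F, ∀ n, σ ≠ initSeg x n := by
  simp [basicNbhd]

lemma basicNbhd_anti {F G : Set (ℕ → Bool)} (h : F ⊆ G) : basicNbhd G ⊆ basicNbhd F := by
  rintro (_ | σ) hσ
  · exact none_mem_basicNbhd F
  · rw [some_mem_basicNbhd_iff] at hσ ⊢
    exact fun x hx => hσ x (h hx)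

lemma isOpen_basicNbhd {X F : Set (ℕ → Bool)} (hFX : F ⊆ X) (hF : F.Finite) :
    (XFtop X).IsOpen (basicNbhd F) :=
  .basic _ (.inr ⟨F, hFX, hF, rfl⟩)

lemma exists_basicNbhd_subset {X : Set (ℕ → Bool)} {V : Set (Option (List Bool))}
    (hV : (XFtop X).IsOpen V) (hnV : none ∈ V) :
    ∃ F, F.Finite ∧ F ⊆ X ∧ basicNbhd F ⊆ V := by
  induction hV with
  | basic s hs =>
    rcases hs with ⟨σ, rfl⟩ | ⟨F, hFX, hF, rfl⟩
    · simp at hnV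
    · exact ⟨F, hF, hFX, subset_rfl⟩
  | univ => exact ⟨∅, finite_empty, empty_subset _, subset_univ _⟩
  | inter s t _ _ ihs iht =>
    obtain ⟨F, hF, hFX, hFs⟩ := ihs hnV.1
    obtain ⟨G, hG, hGX, hGt⟩ := iht hnV.2
    exact ⟨F ∪ G, hF.union hG, union_subset hFX hGX,
      subset_inter ((basicNbhd_anti subset_union_left).trans hFs)
        ((basicNbhd_anti subset_union_right).trans hGt)⟩
  | sUnion S _ ih =>
    obtain ⟨s, hs, hns⟩ := hnV
    obtain ⟨F, hF, hFX, hFs⟩ := ih s hs hns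
    exact ⟨F, hF, hFX, hFs.trans (subset_sUnion_of_mem hs)⟩

noncomputable def nbhdWitness (X : Set (ℕ → Bool)) (V : Set (Option (List Bool))) :
    Set (ℕ → Bool) :=
  Classical.epsilon fun F => F.Finite ∧ F ⊆ X ∧ basicNbhd F ⊆ V

lemma nbhdWitness_spec {X : Set (ℕ → Bool)} {V : Set (Option (List Bool))}
    (hV : (XFtop X).IsOpen V) (hnV : none ∈ V) :
    (nbhdWitness X V).Finite ∧ nbhdWitness X V ⊆ X ∧ basicNbhd (nbhdWitness X V) ⊆ V :=
  Classical.epsilon_spec (exists_basicNbhd_subset hV hnV)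

lemma subset_cylindersCompl_of_subset_basicNbhd {F : Set (ℕ → Bool)}
    {P : Set (Option (List Bool))} (h : P ⊆ basicNbhd F) : F ⊆ cylindersCompl P :=
  fun x hx n hn => some_mem_basicNbhd_iff.1 (h hn) x hx n rfl

lemma complPrefixes_subset_basicNbhd {c F : Set (ℕ → Bool)} (hc : IsClopen c) (hF : F ⊆ c) :
    complPrefixes c ⊆ basicNbhd F := by
  rintro _ ⟨y, hy, rfl⟩
  refine some_mem_basicNbhd_iff.2 fun x hx n heq => ?_
  have hmem : some (initSeg x n) ∈ complPrefixes c := heq ▸ ⟨y, hy, rfl⟩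
  exact ((some_initSeg_mem_complPrefixes_iff hc).1 hmem).2 (hF hx)

theorem convergesTo_none_iff {X : Set (ℕ → Bool)} {p : ℕ → Set (Option (List Bool))}
    (hp : ∀ n, none ∉ p n) :
    ConvergesTo (XFtop X) none p ↔ ∀ x ∈ X, ∀ᶠ n in atTop, x ∈ cylindersCompl (p n) := by
  constructor
  · intro h x hx
    filter_upwards [h _ (isOpen_basicNbhd (singleton_subset_iff.2 hx) (finite_singleton x))
      (none_mem_basicNbhd _)] with n hn
    exact subset_cylindersCompl_of_subset_basicNbhd hn rfl
  · intro h V hV hnV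
    obtain ⟨F, hF, hFX, hFV⟩ := exists_basicNbhd_subset hV hnV
    filter_upwards [(eventually_all_finite hF).2 fun x hx => h x (hFX hx)] with n hn
    rintro (_ | σ) hσ
    · exact absurd hσ (hp n)
    · exact hFV (some_mem_basicNbhd_iff.2 fun x hx m heq => hn x hx m (heq ▸ hσ))

def gammaGame (X : Set (ℕ → Bool)) : SetGame (ℕ → Bool) where
  legalI F := F.Finite ∧ F ⊆ X
  legalII F C := IsClopen C ∧ F ⊆ C
  winI := IsGammaCover X

def nbhdGame {β : Type*} (t : TopologicalSpace β) (y : β) : SetGame β where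
  legalI U := t.IsOpen U ∧ y ∈ U
  legalII U P := P.Finite ∧ P ⊆ U \ {y}
  winI := ConvergesTo t y

lemma winningForF_iff {X : Set (ℕ → Bool)} {σ : List (Set (ℕ → Bool)) → Set (ℕ → Bool)} :
    WinningForF X σ ↔ (gammaGame X).IsWinningI σ :=
  Iff.rfl

lemma winningForC_iff {X : Set (ℕ → Bool)} {σ : List (Set (ℕ → Bool)) → Set (ℕ → Bool)} :
    WinningForC X σ ↔ (gammaGame X).IsWinningII σ :=
  Iff.rfl

lemma winningForO_iff {β : Type*} {t : TopologicalSpace β} {y : β} {σ : List (Set β) → Set β} :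
    WinningForO t y σ ↔ (nbhdGame t y).IsWinningI σ :=
  Iff.rfl

lemma winningForP_iff {β : Type*} {t : TopologicalSpace β} {y : β} {σ : List (Set β) → Set β} :
    WinningForP t y σ ↔ (nbhdGame t y).IsWinningII σ :=
  Iff.rfl

def gammaGameReduction (X : Set (ℕ → Bool)) :
    (gammaGame X).Reduction (nbhdGame (XFtop X) none) where
  mapI := basicNbhd
  mapII := cylindersCompl
  legalI_mapI _ hF := ⟨isOpen_basicNbhd hF.2 hF.1, none_mem_basicNbhd _⟩
  legalII_mapII _ _ _ hP := ⟨isClopen_cylindersCompl hP.1,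
    subset_cylindersCompl_of_subset_basicNbhd (hP.2.trans sdiff_subset)⟩
  winI_of_winI_mapII _ hp hγ :=
    (convergesTo_none_iff fun n hn => (hp n).elim fun _ h => (h.2 hn).2 rfl).2 hγ.2

def nbhdGameReduction (X : Set (ℕ → Bool)) :
    (nbhdGame (XFtop X) none).Reduction (gammaGame X) where
  mapI := nbhdWitness X
  mapII := complPrefixes
  legalI_mapI _ hV := (nbhdWitness_spec hV.1 hV.2).imp_right And.left
  legalII_mapII V c hV hc := ⟨complPrefixes_finite c, fun q hq => ⟨
    (nbhdWitness_spec hV.1 hV.2).2.2 (complPrefixes_subset_basicNbhd hc.1 hc.2 hq),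
    fun hnone => none_notMem_complPrefixes c (mem_singleton_iff.1 hnone ▸ hq)⟩⟩
  winI_of_winI_mapII c hc hconv := by
    have hclopen n : IsClopen (c n) := (hc n).elim fun _ h => h.1
    refine ⟨fun n => (hclopen n).isOpen, fun x hx => ?_⟩
    filter_upwards [(convergesTo_none_iff fun n => none_notMem_complPrefixes _).1 hconv x hx]
      with n hn
    rwa [cylindersCompl_complPrefixes (hclopen n)] at hn

theorem gamma_game_equivalent_to_neighborhood_game
    (X : Set (ℕ → Bool)) :
    ((∃ σ, WinningForF X σ) ↔
      (∃ σ : List (Set (Option (List Bool))) → Set (Option (List Bool)),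
        WinningForO (XFtop X) none σ)) ∧
    ((∃ σ, WinningForC X σ) ↔
      (∃ σ : List (Set (Option (List Bool))) → Set (Option (List Bool)),
        WinningForP (XFtop X) none σ)) := by
  simp only [winningForF_iff, winningForC_iff, winningForO_iff, winningForP_iff]
  exact ⟨⟨fun ⟨_, h⟩ => ⟨_, (gammaGameReduction X).isWinningI h⟩,
      fun ⟨_, h⟩ => ⟨_, (nbhdGameReduction X).isWinningI h⟩⟩,
    ⟨fun ⟨_, h⟩ => ⟨_, (nbhdGameReduction X).isWinningII h⟩,
      fun ⟨_, h⟩ => ⟨_, (gammaGameReduction X).isWinningII h⟩⟩⟩
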